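/- Fix nonnegative integers ν and k and a positive integer n. Let M be the (k+1)×(k+1) rational matrix with entries M_{i,j} = C(i,j)·(i+ν)!·ν!/((i−j+ν)!·(j+ν)!) for 0 ≤ j ≤ i ≤ k and M_{i,j} = 0 for j > i. Then W_{n+1}(ν; 2k) equals the k-th row sum of M^n, i.e., W_{n+1}(ν;2k) = Σ_{j=0}^{k} (M^n)_{k,j}. -/

import Mathlib

/-- `A ν k j` is the rational number `A_{k,j}(ν) = C(k,j)·(k+ν)!·ν! / ((k−j+ν)!·(j+ν)!)`. -/
def A (ν k j : ℕ) : ℚ :=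
  (Nat.choose k j : ℚ) * ((k + ν).factorial : ℚ) * (ν.factorial : ℚ) /
    (((k - j + ν).factorial : ℚ) * ((j + ν).factorial : ℚ))

/-- `W m ν k` is the `2k`-th moment `W_m(ν; 2k)`, given as a sum over all `m`-tuples of
nonnegative integers summing to `k`. -/
def W (m ν k : ℕ) : ℚ :=
  ∑ f ∈ Finset.Nat.antidiagonalTuple m k,
    ((k.factorial : ℚ) * ((k + ν).factorial : ℚ) * ((ν.factorial : ℚ)) ^ (m - 1)) /
      ((∏ i, ((f i).factorial : ℚ)) * ∏ i, ((f i + ν).factorial : ℚ))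

/-- The `(k+1)×(k+1)` lower-triangular matrix with entries `A_{i,j}(ν)`. -/
def M (ν k : ℕ) : Matrix (Fin (k + 1)) (Fin (k + 1)) ℚ :=
  fun i j => if (j : ℕ) ≤ (i : ℕ) then A ν (i : ℕ) (j : ℕ) else 0

/-!
Splitting off the first coordinate of an `(m+2)`-tuple summing to `K` gives the convolution
`W_{m+2}(ν;2K) = ∑_{j ≤ K} A_{K,j}(ν) W_{m+1}(ν;2j)`; since `A_{K,j} = 0` for `j > K`, this says that
the vector `(W_{m+2}(ν;2i))_{i ≤ k}` is `M` times `(W_{m+1}(ν;2i))_{i ≤ k}`. As `W_1 ≡ 1`, the vector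
`(W_{n+1}(ν;2i))_i` is `M^n` applied to the all-ones vector, whose last entry is the last row sum.
-/

open Finset Matrix

theorem sum_antidiagonalTuple_succ {β : Type*} [AddCommMonoid β] (m K : ℕ)
    (F : (Fin (m + 1) → ℕ) → β) :
    ∑ x ∈ Nat.antidiagonalTuple (m + 1) K, F x
      = ∑ p ∈ antidiagonal K, ∑ g ∈ Nat.antidiagonalTuple m p.1, F (Fin.cons p.2 g) := by
  rw [sum_sigma']
  refine sum_bij' (fun (x : Fin (m + 1) → ℕ) _ =>
      (⟨(∑ i : Fin m, x i.succ, x 0), Fin.tail x⟩ : (_ : ℕ × ℕ) × (Fin m → ℕ)))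
    (fun y _ => Fin.cons y.1.2 y.2) ?_ ?_ ?_ ?_ ?_
  · intro x hx
    rw [Nat.mem_antidiagonalTuple, Fin.sum_univ_succ] at hx
    simp only [mem_sigma, HasAntidiagonal.mem_antidiagonal, Nat.mem_antidiagonalTuple]
    exact ⟨by rw [← hx, add_comm], rfl⟩
  · rintro ⟨⟨b, a⟩, g⟩ hy
    simp only [mem_sigma, HasAntidiagonal.mem_antidiagonal, Nat.mem_antidiagonalTuple] at hy ⊢
    rw [Fin.sum_univ_succ]
    simp [hy.2, ← hy.1, add_comm]
  · intro x _; exact Fin.cons_self_tail x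
  · rintro ⟨⟨b, a⟩, g⟩ hy
    simp only [mem_sigma, Nat.mem_antidiagonalTuple] at hy
    simp [hy.2, Fin.tail_cons]
  · intro x _; rw [Fin.cons_self_tail]

theorem W_one (ν K : ℕ) : W 1 ν K = 1 := by
  simp [W, Nat.antidiagonalTuple_one, Nat.factorial_ne_zero]

theorem W_succ_succ (m ν K : ℕ) :
    W (m + 2) ν K = ∑ j ∈ range (K + 1), A ν K j * W (m + 1) ν j := by
  rw [← Nat.sum_antidiagonal_eq_sum_range_succ (fun j _ => A ν K j * W (m + 1) ν j), W,
    sum_antidiagonalTuple_succ]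
  refine sum_congr rfl fun ⟨b, a⟩ hp => ?_
  obtain rfl : b + a = K := HasAntidiagonal.mem_antidiagonal.1 hp
  rw [W, mul_sum]
  refine sum_congr rfl fun g _ => ?_
  have hchoose : ((b + a).choose b : ℚ) * b.factorial * a.factorial = (b + a).factorial := by
    rw [Nat.choose_symm_add]
    exact_mod_cast Nat.add_choose_mul_factorial_mul_factorial b a
  simp only [A, Fin.prod_univ_succ, Fin.cons_zero, Fin.cons_succ, Nat.add_sub_cancel_left,
    Nat.add_sub_cancel, show m + 2 - 1 = m + 1 from rfl, pow_succ]
  rw [← hchoose]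
  field_simp

theorem A_eq_zero_of_lt {ν i j : ℕ} (h : i < j) : A ν i j = 0 := by
  simp [A, Nat.choose_eq_zero_of_lt h]

theorem M_apply (ν k : ℕ) (i j : Fin (k + 1)) : M ν k i j = A ν i j := by
  unfold M
  split_ifs with h
  · rfl
  · exact (A_eq_zero_of_lt (not_le.1 h)).symm

theorem sum_A_mul_of_le {ν i N : ℕ} (h : i ≤ N) (f : ℕ → ℚ) :
    ∑ j ∈ range (N + 1), A ν i j * f j = ∑ j ∈ range (i + 1), A ν i j * f j :=
  (sum_subset (range_subset_range.2 (by omega)) fun j _ hj => by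
    rw [A_eq_zero_of_lt (by simpa using hj), zero_mul]).symm

theorem M_mulVec_W (m ν k : ℕ) :
    M ν k *ᵥ (fun i : Fin (k + 1) => W (m + 1) ν i) = fun i : Fin (k + 1) => W (m + 2) ν i := by
  ext i
  simp only [mulVec, dotProduct, M_apply]
  rw [W_succ_succ, Fin.sum_univ_eq_sum_range (fun j => A ν i j * W (m + 1) ν j),
    sum_A_mul_of_le (Nat.lt_succ_iff.1 i.2)]

theorem W_succ_eq_pow_mulVec_one (n ν k : ℕ) :
    (fun i : Fin (k + 1) => W (n + 1) ν i) = M ν k ^ n *ᵥ 1 := by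
  induction n with
  | zero => ext i; simp [W_one]
  | succ n ih => rw [pow_succ', ← mulVec_mulVec, ← ih, M_mulVec_W]

theorem stmt18_general (ν k : ℕ) (n : ℕ) :
    W (n + 1) ν k = ∑ j : Fin (k + 1), ((M ν k) ^ n) (Fin.last k) j := by
  simpa [mulVec, dotProduct] using congrFun (W_succ_eq_pow_mulVec_one n ν k) (Fin.last k)

/-- `W_{n+1}(ν;2k)` is the `k`-th row sum of the `n`-th power of the matrix `M(ν,k)`. -/
theorem stmt18 (ν k : ℕ) (n : ℕ) (hn : 0 < n) :
    W (n + 1) ν k = ∑ j : Fin (k + 1), ((M ν k) ^ n) (Fin.last k) j :=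
  stmt18_general ν k n
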